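/- Let (A, ∘, α_A, β_A) be a BiHom-pre-Lie algebra, M a vector space with commuting linear maps α_M, β_M and operations ∘_ℓ: A⊗M→M, ∘_r: M⊗A→M. Define on A⊕M: (a+m)∘(a'+m') := a∘a' + a∘_ℓ m' + m∘_r a'. Then (A⊕M, ∘, α_A⊕α_M, β_A⊕β_M) is a BiHom-pre-Lie algebra if and only if (M, ∘_ℓ, ∘_r, α_M, β_M) is a BiHom-pre-Lie bimodule over (A, ∘, α_A, β_A). -/
import Mathlib


/-- (Left) BiHom-pre-Lie algebra `(A, c, α, β)`. -/
def BHPreLie {K A : Type*} [Field K] [AddCommGroup A] [Module K A]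
    (c : A →ₗ[K] A →ₗ[K] A) (α β : A →ₗ[K] A) : Prop :=
  (∀ a, α (β a) = β (α a)) ∧
  (∀ a b, α (c a b) = c (α a) (α b)) ∧
  (∀ a b, β (c a b) = c (β a) (β b)) ∧
  (∀ a b x, c (α (β a)) (c (α b) x) - c (c (β a) (α b)) (β x) =
    c (α (β b)) (c (α a) x) - c (c (β b) (α a)) (β x))

/-- BiHom-Novikov algebra: BiHom-pre-Lie plus `(a*β(b))*αβ(c) = (a*β(c))*αβ(b)`. -/
def BHNovikov {K A : Type*} [Field K] [AddCommGroup A] [Module K A]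
    (c : A →ₗ[K] A →ₗ[K] A) (α β : A →ₗ[K] A) : Prop :=
  BHPreLie c α β ∧
  (∀ a b x, c (c a (β b)) (α (β x)) = c (c a (β x)) (α (β b)))

/-- BiHom-pre-Lie bimodule over a BiHom-pre-Lie algebra `(A, c, α, β)`. -/
def BHPreLieBimod {K A M : Type*} [Field K] [AddCommGroup A] [Module K A]
    [AddCommGroup M] [Module K M]
    (c : A →ₗ[K] A →ₗ[K] A) (α β : A →ₗ[K] A)
    (cl : A →ₗ[K] M →ₗ[K] M) (cr : M →ₗ[K] A →ₗ[K] M)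
    (αM βM : M →ₗ[K] M) : Prop :=
  (∀ m, αM (βM m) = βM (αM m)) ∧
  (∀ a m, αM (cl a m) = cl (α a) (αM m)) ∧
  (∀ m a, αM (cr m a) = cr (αM m) (α a)) ∧
  (∀ a m, βM (cl a m) = cl (β a) (βM m)) ∧
  (∀ m a, βM (cr m a) = cr (βM m) (β a)) ∧
  (∀ a b m, cl (α (β a)) (cl (α b) m) - cl (c (β a) (α b)) (βM m) =
    cl (α (β b)) (cl (α a) m) - cl (c (β b) (α a)) (βM m)) ∧
  (∀ a m x, cl (α (β a)) (cr (αM m) x) - cr (cl (β a) (αM m)) (β x) =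
    cr (αM (βM m)) (c (α a) x) - cr (cr (βM m) (α a)) (β x))

/-- the semidirect-sum operation on `A ⊕ M` is BiHom-pre-Lie iff
`M` is a BiHom-pre-Lie bimodule over `(A, c, α, β)`. -/
theorem stmt6 (K A M : Type*) [Field K] [AddCommGroup A] [Module K A]
    [AddCommGroup M] [Module K M]
    (c : A →ₗ[K] A →ₗ[K] A) (α β : A →ₗ[K] A)
    (cl : A →ₗ[K] M →ₗ[K] M) (cr : M →ₗ[K] A →ₗ[K] M)
    (αM βM : M →ₗ[K] M)
    (hA : BHPreLie c α β)
    (hM : ∀ m, αM (βM m) = βM (αM m))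
    (cP : A × M →ₗ[K] A × M →ₗ[K] A × M)
    (hcP : ∀ (a : A) (m : M) (b : A) (n : M), cP (a, m) (b, n) = (c a b, cl a n + cr m b))
    (αP βP : A × M →ₗ[K] A × M)
    (hαP : ∀ (a : A) (m : M), αP (a, m) = (α a, αM m))
    (hβP : ∀ (a : A) (m : M), βP (a, m) = (β a, βM m)) :
    BHPreLie cP αP βP ↔ BHPreLieBimod c α β cl cr αM βM := by
  obtain ⟨hc1, hc2, hc3, hc4⟩ := hA
  constructor
  · rintro ⟨h1, h2, h3, h4⟩
    refine ⟨hM, ?_, ?_, ?_, ?_, ?_, ?_⟩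
    · intro a m
      have := h2 (a, 0) (0, m)
      simpa [hcP, hαP, hβP, Prod.ext_iff] using this
    · intro m a
      have := h2 (0, m) (a, 0)
      simpa [hcP, hαP, hβP, Prod.ext_iff] using this
    · intro a m
      have := h3 (a, 0) (0, m)
      simpa [hcP, hαP, hβP, Prod.ext_iff] using this
    · intro m a
      have := h3 (0, m) (a, 0)
      simpa [hcP, hαP, hβP, Prod.ext_iff] using this
    · intro a b m
      have := h4 (a, 0) (b, 0) (0, m)
      simpa [hcP, hαP, hβP, Prod.ext_iff] using this
    · intro a m x
      have := h4 (a, 0) (0, m) (x, 0)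
      simpa [hcP, hαP, hβP, Prod.ext_iff] using this
  · rintro ⟨b1, b2, b3, b4, b5, b6, b7⟩
    refine ⟨?_, ?_, ?_, ?_⟩
    · rintro ⟨a, m⟩
      simp [hαP, hβP, hc1, b1]
    · rintro ⟨a, m⟩ ⟨b, n⟩
      simp [hcP, hαP, hc2, b2, b3]
    · rintro ⟨a, m⟩ ⟨b, n⟩
      simp [hcP, hβP, hc3, b4, b5]
    · rintro ⟨a, m⟩ ⟨b, n⟩ ⟨x, p⟩
      simp only [hcP, hαP, hβP, Prod.mk_sub_mk, Prod.mk.injEq, map_add, LinearMap.add_apply]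
      refine ⟨hc4 a b x, ?_⟩
      have e6 := b6 a b p
      have e7a := b7 a n x
      have e7b := b7 b m x
      linear_combination (norm := abel) e6 + e7a - e7b
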